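/- Let ℓ ≥ 1 be an integer, a = 2π/(2ℓ+1), and for j = -ℓ,…,ℓ let p_j = (x₁ + i·sin(j·a)·x₂ + i·cos(j·a)·x₃)^ℓ in ℂ[x₁,x₂,x₃]. Then every polynomial p ∈ ℂ[x₁,x₂,x₃] that is homogeneous of degree ℓ and satisfies Δp = 0 lies in the ℂ-linear span of {p_j : j = -ℓ,…,ℓ}. In particular the p_j form a basis of the space of complex homogeneous harmonic polynomials of degree ℓ in three variables. -/

import Mathlib

open MvPolynomial

/-- The null-vector polynomial `p_j = (x₁ + i sin(j a) x₂ + i cos(j a) x₃)^ℓ`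
with `a = 2π/(2ℓ+1)`. -/
noncomputable def nullPoly (ℓ : ℕ) (j : ℤ) : MvPolynomial (Fin 3) ℂ :=
  (X 0
    + C (Complex.I * (Real.sin ((j : ℝ) * (2 * Real.pi / (2 * ℓ + 1))) : ℂ)) * X 1
    + C (Complex.I * (Real.cos ((j : ℝ) * (2 * Real.pi / (2 * ℓ + 1))) : ℂ)) * X 2) ^ ℓ

/-!
A harmonic polynomial is determined by its coefficients of degree at most one in `x₀`, because
`Δp = 0` expresses every coefficient of `x₀^(a+2)` through coefficients of lower `x₀`-degree.
Hence the homogeneous harmonic polynomials of degree `ℓ` form a space of dimension at most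
`2ℓ + 1`. Each `p_j` is the `ℓ`-th power of a linear form with isotropic coefficient vector, hence
harmonic. They are linearly independent: along the parametrisation `t ↦ (2t, t² - 1, -i(t² + 1))`
of the null cone, `p_j` becomes `ζʲˡ (t + ζ⁻ʲ)^(2ℓ)` with `ζ = e^(2πi/(2ℓ+1))`, and the powers
`(t + a)^N` for `N + 1` distinct values of `a` are independent by a Vandermonde argument.
Being `2ℓ + 1` independent harmonic polynomials, the `p_j` span the whole space.
-/

namespace MvPolynomial

section Laplacian

variable {σ R : Type*} [Fintype σ] [CommSemiring R]

noncomputable def laplacian : MvPolynomial σ R →ₗ[R] MvPolynomial σ R :=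
  ∑ i, (pderiv i).toLinearMap ∘ₗ (pderiv i).toLinearMap

theorem laplacian_apply (p : MvPolynomial σ R) :
    laplacian p = ∑ i, pderiv i (pderiv i p) := by
  simp [laplacian]

theorem coeff_laplacian [DecidableEq σ] (p : MvPolynomial σ R) (m : σ →₀ ℕ) :
    coeff m (laplacian p) =
      ∑ i, coeff (m + Finsupp.single i 2) p * ((m i + 1) * (m i + 2)) := by
  simp only [laplacian_apply, coeff_sum, coeff_pderiv, Finsupp.add_apply,
    Finsupp.single_eq_same, add_assoc, ← Finsupp.single_add]
  push_cast
  ring_nf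

theorem eq_zero_of_laplacian_eq_zero [NoZeroDivisors R] [CharZero R] {p : MvPolynomial σ R}
    (i₀ : σ) (hp : laplacian p = 0) (hlow : ∀ m : σ →₀ ℕ, m i₀ ≤ 1 → coeff m p = 0) :
    p = 0 := by
  classical
  ext m
  induction hm : m i₀ using Nat.strong_induction_on generalizing m with
  | _ n ih =>
  rw [coeff_zero]
  rcases le_or_gt n 1 with hn | hn
  · exact hlow m (hm ▸ hn)
  obtain ⟨m, rfl⟩ : ∃ m', m = m' + Finsupp.single i₀ 2 :=
    ⟨m - Finsupp.single i₀ 2, (tsub_add_cancel_of_le (Finsupp.single_le_iff.mpr (by omega))).symm⟩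
  have hrel := coeff_laplacian p m
  rw [hp, coeff_zero, Finset.sum_eq_single i₀] at hrel
  · refine (mul_eq_zero.mp hrel.symm).resolve_right ?_
    exact_mod_cast (by positivity : (m i₀ + 1) * (m i₀ + 2) ≠ 0)
  · intro i _ hi
    rw [ih (m i₀) (by simp at hm; omega) _ (by simp [hi]), coeff_zero, zero_mul]
  · simp

variable (σ R) in
noncomputable def harmonicSubmodule (n : ℕ) : Submodule R (MvPolynomial σ R) :=
  homogeneousSubmodule σ R n ⊓ LinearMap.ker laplacian

end Laplacian

section LinearForm

variable {σ R : Type*} [Fintype σ] [CommSemiring R]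

noncomputable def linearForm (c : σ → R) : MvPolynomial σ R :=
  ∑ i, C (c i) * X i

theorem pderiv_linearForm (c : σ → R) (i : σ) : pderiv i (linearForm c) = C (c i) := by
  classical
  simp [linearForm, pderiv_X, Pi.single_apply]

theorem isHomogeneous_linearForm (c : σ → R) : (linearForm c).IsHomogeneous 1 :=
  IsHomogeneous.sum _ _ _ fun i _ => (isHomogeneous_X R i).C_mul (c i)

theorem aeval_linearForm {S : Type*} [CommSemiring S] [Algebra R S] (c : σ → R) (v : σ → S) :
    aeval v (linearForm c) = ∑ i, algebraMap R S (c i) * v i := by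
  simp [linearForm]

theorem laplacian_linearForm_pow {c : σ → R} (hc : ∑ i, c i ^ 2 = 0) (n : ℕ) :
    laplacian (linearForm c ^ n) = 0 := by
  have h : ∀ i, pderiv i (pderiv i (linearForm c ^ n)) =
      C (c i ^ 2) * ((n * (n - 1 : ℕ) : MvPolynomial σ R) * linearForm c ^ (n - 1 - 1)) := by
    intro i
    simp only [Derivation.leibniz_pow, pderiv_linearForm, smul_eq_mul, nsmul_eq_mul,
      Derivation.leibniz, derivation_C, mul_zero, zero_add, Derivation.map_natCast, add_zero, C_pow]
    ring
  simp only [laplacian_apply, h, ← Finset.sum_mul, ← map_sum, hc, map_zero, zero_mul]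

theorem linearForm_pow_mem_harmonicSubmodule {c : σ → R} (hc : ∑ i, c i ^ 2 = 0) (n : ℕ) :
    linearForm c ^ n ∈ harmonicSubmodule σ R n :=
  ⟨by simpa using (isHomogeneous_linearForm c).pow n, laplacian_linearForm_pow hc n⟩

end LinearForm

end MvPolynomial

theorem Polynomial.linearIndependent_X_add_C_pow_fin {K : Type*} [Field K] [CharZero K]
    {n N : ℕ} {a : Fin n → K} (ha : Function.Injective a) (hn : n ≤ N + 1) :
    LinearIndependent K fun i => (X + C (a i)) ^ N := by
  rw [Fintype.linearIndependent_iff]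
  intro g hg
  refine congrFun (Matrix.eq_zero_of_forall_pow_sum_mul_pow_eq_zero ha fun k => ?_)
  have hcoeff := congrArg (coeff · (N - k)) hg
  simp only [finsetSum_coeff, coeff_smul, coeff_X_add_C_pow, smul_eq_mul, coeff_zero,
    Nat.sub_sub_self (show (k : ℕ) ≤ N by omega), ← mul_assoc, ← Finset.sum_mul] at hcoeff
  exact (mul_eq_zero.mp hcoeff).resolve_right (Nat.cast_ne_zero.mpr (Nat.choose_pos (by omega)).ne')

theorem Polynomial.linearIndependent_X_add_C_pow {K ι : Type*} [Field K] [CharZero K]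
    [Fintype ι] {N : ℕ} {a : ι → K} (ha : Function.Injective a) (hι : Fintype.card ι ≤ N + 1) :
    LinearIndependent K fun i => (X + C (a i)) ^ N := by
  let e := Fintype.equivFin ι
  have := (linearIndependent_X_add_C_pow_fin (ha.comp e.symm.injective) hι).comp e e.injective
  simpa [Function.comp_def] using this

theorem IsPrimitiveRoot.zpow_inj {G : Type*} [CommGroupWithZero G] {ζ : G} {k : ℕ}
    (h : IsPrimitiveRoot ζ k) {i j : ℤ} (hij : |i - j| < k) (H : ζ ^ i = ζ ^ j) : i = j := by
  have hζ : ζ ≠ 0 := h.ne_zero (by rintro rfl; simp at hij; linarith [abs_nonneg (i - j)])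
  rw [← sub_eq_zero]
  refine Int.eq_zero_of_abs_lt_dvd ((h.zpow_eq_one_iff_dvd _).mp ?_) hij
  rw [zpow_sub₀ hζ, H, div_self (zpow_ne_zero _ hζ)]

open Complex

noncomputable def nullVector (θ : ℝ) : Fin 3 → ℂ :=
  ![1, I * Real.sin θ, I * Real.cos θ]

theorem sum_nullVector_sq (θ : ℝ) : ∑ i, nullVector θ i ^ 2 = 0 := by
  simp only [nullVector, Fin.sum_univ_three, Matrix.cons_val_zero, Matrix.cons_val_one,
    Matrix.cons_val_two, Matrix.tail_cons, Matrix.head_cons]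
  have h : (Real.sin θ : ℂ) ^ 2 + (Real.cos θ : ℂ) ^ 2 = 1 := by
    exact_mod_cast Real.sin_sq_add_cos_sq θ
  linear_combination (-1 : ℂ) * h + ((Real.sin θ : ℂ) ^ 2 + (Real.cos θ : ℂ) ^ 2) * I_sq

theorem nullPoly_eq_linearForm_pow (ℓ : ℕ) (j : ℤ) :
    nullPoly ℓ j = linearForm (nullVector (j * (2 * Real.pi / (2 * ℓ + 1)))) ^ ℓ := by
  simp [nullPoly, linearForm, nullVector, Fin.sum_univ_three]

theorem nullPoly_mem_harmonicSubmodule (ℓ : ℕ) (j : ℤ) :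
    nullPoly ℓ j ∈ harmonicSubmodule (Fin 3) ℂ ℓ := by
  rw [nullPoly_eq_linearForm_pow]
  exact linearForm_pow_mem_harmonicSubmodule (sum_nullVector_sq _) ℓ

noncomputable def nullConeParam : Fin 3 → Polynomial ℂ :=
  ![2 * Polynomial.X, Polynomial.X ^ 2 - 1, Polynomial.C (-I) * (Polynomial.X ^ 2 + 1)]

theorem aeval_nullConeParam_linearForm_nullVector (θ : ℝ) :
    aeval nullConeParam (linearForm (nullVector θ)) =
      Polynomial.C (exp (θ * I)) * (Polynomial.X + Polynomial.C (exp (θ * I))⁻¹) ^ 2 := by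
  have h₁ : Polynomial.C (exp (θ * I)) =
      Polynomial.C (Real.cos θ : ℂ) + Polynomial.C I * Polynomial.C (Real.sin θ : ℂ) := by
    rw [exp_mul_I, ← ofReal_cos, ← ofReal_sin, map_add, map_mul, mul_comm (Polynomial.C _)]
  have h₂ : Polynomial.C (exp (θ * I))⁻¹ =
      Polynomial.C (Real.cos θ : ℂ) - Polynomial.C I * Polynomial.C (Real.sin θ : ℂ) := by
    rw [← exp_neg, ← neg_mul, exp_mul_I, cos_neg, sin_neg, ← ofReal_cos, ← ofReal_sin, neg_mul,
      ← sub_eq_add_neg, map_sub, map_mul, mul_comm (Polynomial.C _)]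
  have hinv : Polynomial.C (exp (θ * I)) * Polynomial.C (exp (θ * I))⁻¹ = 1 := by
    rw [← Polynomial.C_mul, mul_inv_cancel₀ (exp_ne_zero _), Polynomial.C_1]
  have hI : Polynomial.C I * Polynomial.C I = -1 := by
    rw [← Polynomial.C_mul, I_mul_I, Polynomial.C_neg, Polynomial.C_1]
  simp only [aeval_linearForm, nullVector, nullConeParam, Fin.sum_univ_three,
    Matrix.cons_val_zero, Matrix.cons_val_one, Matrix.cons_val_two, Matrix.tail_cons,
    Matrix.head_cons, Polynomial.algebraMap_eq, map_one, map_mul, map_neg]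
  linear_combination (-Polynomial.C (Real.cos θ : ℂ) * (Polynomial.X ^ 2 + 1)) * hI
    - Polynomial.X ^ 2 * h₁ - h₂ - (2 * Polynomial.X + Polynomial.C (exp (θ * I))⁻¹) * hinv

theorem aeval_nullConeParam_nullPoly (ℓ : ℕ) (j : ℤ) :
    aeval nullConeParam (nullPoly ℓ j) =
      Polynomial.C ((exp (2 * Real.pi * I / ↑(2 * ℓ + 1)) ^ j) ^ ℓ) *
        (Polynomial.X + Polynomial.C (exp (2 * Real.pi * I / ↑(2 * ℓ + 1)) ^ j)⁻¹) ^ (2 * ℓ) := by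
  have hθ : exp (↑((j : ℝ) * (2 * Real.pi / (2 * ℓ + 1))) * I) =
      exp (2 * Real.pi * I / ↑(2 * ℓ + 1)) ^ j := by
    rw [← exp_int_mul]
    push_cast
    ring_nf
  rw [nullPoly_eq_linearForm_pow, map_pow, aeval_nullConeParam_linearForm_nullVector, hθ, mul_pow,
    ← pow_mul, ← Polynomial.C_pow, mul_comm 2 ℓ]

theorem linearIndependent_nullPoly (ℓ : ℕ) :
    LinearIndependent ℂ fun j : Finset.Icc (-(ℓ : ℤ)) ℓ => nullPoly ℓ j := by
  set ζ := exp (2 * Real.pi * I / ↑(2 * ℓ + 1))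
  have hζ : IsPrimitiveRoot ζ (2 * ℓ + 1) := isPrimitiveRoot_exp _ (by omega)
  have hζ₀ : ζ ≠ 0 := exp_ne_zero _
  have hinj : Function.Injective fun j : Finset.Icc (-(ℓ : ℤ)) ℓ => (ζ ^ (j : ℤ))⁻¹ := by
    rintro ⟨j, hj⟩ ⟨k, hk⟩ h
    rw [Finset.mem_Icc] at hj hk
    exact Subtype.ext <| hζ.zpow_inj (by rw [abs_lt]; push_cast; omega) (inv_injective h)
  have hcard : Fintype.card (Finset.Icc (-(ℓ : ℤ)) ℓ) ≤ 2 * ℓ + 1 := by simp; omega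
  let w : Finset.Icc (-(ℓ : ℤ)) ℓ → ℂˣ :=
    fun j => Units.mk0 ((ζ ^ (j : ℤ)) ^ ℓ) (pow_ne_zero _ (zpow_ne_zero _ hζ₀))
  have hfam :
      (aeval nullConeParam).toLinearMap ∘ (fun j : Finset.Icc (-(ℓ : ℤ)) ℓ => nullPoly ℓ j) =
        w • fun j : Finset.Icc (-(ℓ : ℤ)) ℓ =>
          (Polynomial.X + Polynomial.C (ζ ^ (j : ℤ))⁻¹) ^ (2 * ℓ) := by
    ext1 j
    rw [Function.comp_apply, AlgHom.toLinearMap_apply, aeval_nullConeParam_nullPoly,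
      ← Polynomial.smul_eq_C_mul]
    rfl
  refine LinearIndependent.of_comp (aeval nullConeParam).toLinearMap ?_
  rw [hfam]
  exact (Polynomial.linearIndependent_X_add_C_pow hinj hcard).units_smul w

/-- Enumerates, for `k ≤ 2ℓ`, the exponents of degree `ℓ` with `x₀`-degree at most one. -/
noncomputable def lowExponent (ℓ k : ℕ) : Fin 3 →₀ ℕ :=
  if k ≤ ℓ then Finsupp.single 1 k + Finsupp.single 2 (ℓ - k)
  else Finsupp.single 0 1 + Finsupp.single 1 (k - (ℓ + 1)) + Finsupp.single 2 (2 * ℓ - k)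

theorem exists_lowExponent_eq {ℓ : ℕ} {m : Fin 3 →₀ ℕ} (hm : m.degree = ℓ) (h₀ : m 0 ≤ 1) :
    ∃ k < 2 * ℓ + 1, lowExponent ℓ k = m := by
  rw [Finsupp.degree_eq_sum, Fin.sum_univ_three] at hm
  obtain h | h : m 0 = 0 ∨ m 0 = 1 := by omega
  · refine ⟨m 1, by omega, ?_⟩
    ext i
    fin_cases i <;> simp [lowExponent, show m 1 ≤ ℓ by omega] <;> omega
  · refine ⟨ℓ + 1 + m 1, by omega, ?_⟩
    ext i
    fin_cases i <;> simp [lowExponent, show ¬ ℓ + 1 + m 1 ≤ ℓ by omega] <;> omega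

section Dimension

variable {K : Type*} [Field K] [CharZero K] (ℓ : ℕ)

noncomputable def lowCoeffs : MvPolynomial (Fin 3) K →ₗ[K] (Fin (2 * ℓ + 1) → K) :=
  LinearMap.pi fun k => lcoeff K (lowExponent ℓ k)

theorem injective_lowCoeffs_harmonicSubmodule :
    Function.Injective (lowCoeffs ℓ ∘ₗ (harmonicSubmodule (Fin 3) K ℓ).subtype) := by
  rw [← LinearMap.ker_eq_bot, LinearMap.ker_eq_bot']
  rintro ⟨q, hhom, hharm⟩ hq
  refine Subtype.ext (eq_zero_of_laplacian_eq_zero 0 hharm fun m hm => ?_)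
  by_cases hdeg : m.degree = ℓ
  · obtain ⟨k, hk, rfl⟩ := exists_lowExponent_eq hdeg hm
    exact congrFun hq ⟨k, hk⟩
  · exact (mem_homogeneousSubmodule ℓ q).mp hhom |>.coeff_eq_zero hdeg

instance : FiniteDimensional K (harmonicSubmodule (Fin 3) K ℓ) :=
  .of_injective _ (injective_lowCoeffs_harmonicSubmodule ℓ)

theorem finrank_harmonicSubmodule_le :
    Module.finrank K (harmonicSubmodule (Fin 3) K ℓ) ≤ 2 * ℓ + 1 := by
  simpa using LinearMap.finrank_le_finrank_of_injective
    (injective_lowCoeffs_harmonicSubmodule (K := K) ℓ)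

end Dimension

theorem span_nullPoly_eq_harmonicSubmodule (ℓ : ℕ) :
    Submodule.span ℂ (Set.range fun j : Finset.Icc (-(ℓ : ℤ)) ℓ => nullPoly ℓ j) =
      harmonicSubmodule (Fin 3) ℂ ℓ := by
  refine Submodule.eq_of_le_of_finrank_le ?_ ?_
  · rw [Submodule.span_le]
    rintro _ ⟨j, rfl⟩
    exact nullPoly_mem_harmonicSubmodule ℓ j
  · rw [finrank_span_eq_card (linearIndependent_nullPoly ℓ)]
    simpa [Int.card_Icc, show (ℓ + 1 + ℓ : ℤ).toNat = 2 * ℓ + 1 by omega]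
      using finrank_harmonicSubmodule_le ℓ

theorem harmonic_mem_span_nullPoly_general (ℓ : ℕ) (p : MvPolynomial (Fin 3) ℂ)
    (hhom : p.IsHomogeneous ℓ)
    (hharm : ∑ i : Fin 3, pderiv i (pderiv i p) = 0) :
    p ∈ Submodule.span ℂ
      (Set.range (fun j : (Finset.Icc (-(ℓ : ℤ)) ℓ) => nullPoly ℓ j.1)) := by
  rw [span_nullPoly_eq_harmonicSubmodule]
  exact Submodule.mem_inf.mpr ⟨hhom, LinearMap.mem_ker.mpr (by rwa [laplacian_apply])⟩

/-- Every homogeneous harmonic polynomial of degree `ℓ` in three variables lies in the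
span of the `2ℓ+1` polynomials `p_j`, `j = -ℓ, …, ℓ`. -/
theorem harmonic_mem_span_nullPoly (ℓ : ℕ) (hℓ : 1 ≤ ℓ) (p : MvPolynomial (Fin 3) ℂ)
    (hhom : p.IsHomogeneous ℓ)
    (hharm : ∑ i : Fin 3, pderiv i (pderiv i p) = 0) :
    p ∈ Submodule.span ℂ
      (Set.range (fun j : (Finset.Icc (-(ℓ : ℤ)) ℓ) => nullPoly ℓ j.1)) :=
  harmonic_mem_span_nullPoly_general ℓ p hhom hharm
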